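/- Monotonicity of replay: if U ⇒T V then the total number of pre/post event pairs in V is strictly smaller than in U whenever T is nonempty; hence replay to a residual configuration terminates, and the length of any emitted trace T is exactly twice the number of Sync steps performed. -/

import Mathlib

inductive Var where
  | user : ℕ → Var
  | tr : ℕ → Var
  | tmp : Var
deriving DecidableEq

/-- Run-time trace events: `i#x!` and `(i←j)#x?`. -/
inductive RTEvent where
  | snd : ℕ → Var → RTEvent
  | rcv : ℕ → ℕ → Var → RTEvent
deriving DecidableEq

/-- Potential operations recorded in pre events. -/
inductive Op where
  | snd : Var → Op
  | rcv : Var → Op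
deriving DecidableEq

/-- Local trace items: pre events and committed post events. -/
inductive Item where
  | pre : List Op → Item
  | postSnd : Var → Item
  | postRcv : ℕ → Var → Item
deriving DecidableEq

/-- Parse a local trace into its sequence of pre/post event pairs
(a dangling pre event gets a dummy `none` post). -/
def pairs : List Item → List (List Op × Option Item)
  | [] => []
  | .pre as :: .postSnd x :: L => (as, some (.postSnd x)) :: pairs L
  | .pre as :: .postRcv i x :: L => (as, some (.postRcv i x)) :: pairs L
  | [.pre as] => [(as, none)]
  | .pre as :: .pre bs :: L => (as, none) :: pairs (.pre bs :: L)
  | .postSnd _ :: L => pairs L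
  | .postRcv _ _ :: L => pairs L

/-- Nodes of the dependency graph are pairs (thread id, event index);
`nodePair U a` returns the pre/post event pair of node `a`, if any. -/
def nodePair (U : List (ℕ × List Item)) (a : ℕ × ℕ) : Option (List Op × Option Item) :=
  match U.find? (fun p => p.1 == a.1) with
  | some p => (pairs p.2)[a.2]?
  | none => none

/-- Intra-thread program-order edge: from each event occurrence to the immediately
following event occurrence of the same local trace. -/
def IntraEdge (U : List (ℕ × List Item)) (a b : ℕ × ℕ) : Prop :=
  b.1 = a.1 ∧ b.2 = a.2 + 1 ∧ (nodePair U b).isSome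

/-- Synchronization edge: from a committed send to a matching committed receive that
records the sender's thread id. -/
def SyncEdge (U : List (ℕ × List Item)) (a b : ℕ × ℕ) : Prop :=
  ∃ x as bs, nodePair U a = some (as, some (.postSnd x)) ∧
    nodePair U b = some (bs, some (.postRcv a.1 x))

/-- Edges of the dependency graph. -/
def Edge (U : List (ℕ × List Item)) (a b : ℕ × ℕ) : Prop :=
  IntraEdge U a b ∨ SyncEdge U a b

/-- Replay indexed by the number of Sync steps performed. -/
inductive ReplayN : List (ℕ × List Item) → List RTEvent → List (ℕ × List Item) → ℕ → Prop where
  | sync : Op.snd x ∈ as → Op.rcv x ∈ bs →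
      ReplayN ((i1, .pre as :: .postSnd x :: L1) :: (i2, .pre bs :: .postRcv i1 x :: L2) :: U)
              [.snd i1 x, .rcv i2 i1 x]
              ((i1, L1) :: (i2, L2) :: U) 1
  | schedule : U.Perm V → ReplayN U [] V 0
  | closure : ReplayN U T U' n → ReplayN U' T' U'' m → ReplayN U (T ++ T') U'' (n + m)

/-- Total number of pre/post event pairs in a list of local traces. -/
def pairCount (U : List (ℕ × List Item)) : ℕ :=
  (U.map (fun p => (pairs p.2).length)).sum

/-! Every Sync step removes one pre/post pair from each of two threads and emits two events,
while Schedule only permutes the threads; so a replay with `n` Sync steps both consumes and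
emits exactly `2 * n`, and a nonempty trace forces `n > 0`. -/

lemma pairCount_cons (i : ℕ) (L : List Item) (U : List (ℕ × List Item)) :
    pairCount ((i, L) :: U) = (pairs L).length + pairCount U := by
  simp [pairCount]

lemma List.Perm.pairCount_eq {U V : List (ℕ × List Item)} (h : U.Perm V) :
    pairCount U = pairCount V :=
  (h.map _).sum_eq

namespace ReplayN

variable {U V : List (ℕ × List Item)} {T : List RTEvent} {n : ℕ}

theorem trace_length_eq (h : ReplayN U T V n) : T.length = 2 * n := by
  induction h with
  | sync _ _ => rfl
  | schedule _ => rfl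
  | closure _ _ ih₁ ih₂ => rw [List.length_append, ih₁, ih₂, Nat.mul_add]

theorem pairCount_eq (h : ReplayN U T V n) : pairCount U = pairCount V + 2 * n := by
  induction h with
  | sync _ _ =>
    simp only [pairCount_cons, pairs, List.length_cons]
    omega
  | schedule hp => exact hp.pairCount_eq
  | closure _ _ ih₁ ih₂ => omega

end ReplayN

/-- Monotonicity of replay: if `U ⇒T V` emits a nonempty trace then the number of
pre/post event pairs strictly decreases, and the length of the emitted trace is
exactly twice the number of Sync steps performed. -/
theorem replay_monotone (U V : List (ℕ × List Item)) (T : List RTEvent) (n : ℕ)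
    (h : ReplayN U T V n) :
    (T ≠ [] → pairCount V < pairCount U) ∧ T.length = 2 * n := by
  have hlen := h.trace_length_eq
  refine ⟨fun hT => ?_, hlen⟩
  have hpos : 0 < T.length := List.length_pos_iff.mpr hT
  have := h.pairCount_eq
  omega
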